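/- Let p ≠ 3 be a prime such that for every prime q, ℓ(q) = lcm(q, z(q)) does not divide z(p). Then p = gcd(ℓ(p), F_{ℓ(p)}), i.e., p belongs to the set 𝒜 = {gcd(n, F_n) : n ≥ 1}. -/
import Mathlib


lemma exists_fib_dvd (n : ℕ) (hn : 0 < n) : ∃ k, 0 < k ∧ n ∣ Nat.fib k := by
  haveI : NeZero n := ⟨hn.ne'⟩
  obtain ⟨a, b, hab, hfab⟩ := Finite.exists_ne_map_eq_of_infinite
    (fun k : ℕ => ((Nat.fib k : ZMod n), (Nat.fib (k+1) : ZMod n)))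
  wlog hlt : a < b generalizing a b
  · exact this b a hab.symm hfab.symm (by omega)
  simp only [Prod.mk.injEq] at hfab
  obtain ⟨d, hd0, rfl⟩ : ∃ d, 0 < d ∧ b = a + d := ⟨b - a, by omega, by omega⟩
  have key : ∀ j, j ≤ a → ((Nat.fib (a - j + d) : ZMod n) = Nat.fib (a - j)
      ∧ (Nat.fib (a - j + d + 1) : ZMod n) = Nat.fib (a - j + 1)) := by
    intro j
    induction j with
    | zero =>
      intro _
      simpa using ⟨hfab.1.symm, hfab.2.symm⟩
    | succ j ih =>
      intro hj
      have hIH := ih (by omega)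
      have hm1 : a - j = (a - (j+1)) + 1 := by omega
      rw [hm1] at hIH
      set m := a - (j+1) with hm
      have e1 : m + 1 + d = m + d + 1 := by omega
      have e2 : m + 1 + d + 1 = m + d + 2 := by omega
      rw [e2, e1] at hIH
      refine ⟨?_, hIH.1⟩
      have ha : (Nat.fib (m+d+2) : ZMod n) = Nat.fib (m+d) + Nat.fib (m+d+1) := by
        rw [Nat.fib_add_two]; push_cast; ring
      have hb2 : (Nat.fib (m+2) : ZMod n) = Nat.fib m + Nat.fib (m+1) := by
        rw [Nat.fib_add_two]; push_cast; ring
      have h2 : (Nat.fib (m+d+2) : ZMod n) = Nat.fib (m+2) := by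
        have := hIH.2; rwa [show m + 1 + 1 = m + 2 from rfl] at this
      linear_combination h2 - hIH.1 - ha + hb2
  have h0 := (key a le_rfl).1
  simp only [Nat.sub_self, Nat.zero_add] at h0
  rw [show Nat.fib 0 = 0 from rfl] at h0
  push_cast at h0
  exact ⟨d, hd0, by rwa [ZMod.natCast_eq_zero_iff] at h0⟩

/-- Rank of appearance of `n` in the Fibonacci sequence. -/
noncomputable def zf (n : ℕ) : ℕ := sInf {k | 0 < k ∧ n ∣ Nat.fib k}

noncomputable def ellf (n : ℕ) : ℕ := Nat.lcm n (zf n)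

def gf (n : ℕ) : ℕ := Nat.gcd n (Nat.fib n)

def Afib : Set ℕ := {m | ∃ n : ℕ, 0 < n ∧ gf n = m}



lemma zf_mem (n : ℕ) (hn : 0 < n) : 0 < zf n ∧ n ∣ Nat.fib (zf n) :=
  Nat.sInf_mem (s := {k | 0 < k ∧ n ∣ Nat.fib k}) (exists_fib_dvd n hn)

lemma zf_pos (n : ℕ) (hn : 0 < n) : 0 < zf n := (zf_mem n hn).1

lemma zf_dvd_iff (n m : ℕ) (hn : 0 < n) : zf n ∣ m ↔ n ∣ Nat.fib m := by
  constructor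
  · intro hd
    exact dvd_trans (zf_mem n hn).2 (Nat.fib_dvd _ _ hd)
  · intro hd
    rcases Nat.eq_zero_or_pos m with rfl | hm
    · exact dvd_zero _
    have hg : n ∣ Nat.fib (Nat.gcd (zf n) m) := by
      rw [Nat.fib_gcd]
      exact Nat.dvd_gcd (zf_mem n hn).2 hd
    have hgpos : 0 < Nat.gcd (zf n) m := Nat.gcd_pos_of_pos_right _ hm
    have hle : zf n ≤ Nat.gcd (zf n) m := Nat.sInf_le ⟨hgpos, hg⟩
    have hle' : Nat.gcd (zf n) m ≤ zf n :=
      Nat.le_of_dvd (zf_pos n hn) (Nat.gcd_dvd_left _ _)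
    have : Nat.gcd (zf n) m = zf n := le_antisymm hle' hle
    rw [← this]; exact Nat.gcd_dvd_right _ _

lemma zf_eq (n k : ℕ) (hk : 0 < k) (hdvd : n ∣ Nat.fib k)
    (hmin : ∀ j, 0 < j → j < k → ¬ n ∣ Nat.fib j) : zf n = k := by
  refine le_antisymm (Nat.sInf_le ⟨hk, hdvd⟩) ?_
  by_contra hlt
  push_neg at hlt
  obtain ⟨h1, h2⟩ := Nat.sInf_mem (s := {j | 0 < j ∧ n ∣ Nat.fib j}) ⟨k, hk, hdvd⟩
  exact hmin _ h1 hlt h2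

lemma zf_two : zf 2 = 3 := by
  apply zf_eq 2 3 (by norm_num) (by norm_num [Nat.fib])
  intro j h1 h2 hd
  interval_cases j <;> simp_all [Nat.fib] <;> omega

lemma zf_five : zf 5 = 5 := by
  apply zf_eq 5 5 (by norm_num) (by norm_num [Nat.fib])
  intro j h1 h2 hd
  interval_cases j <;> simp_all [Nat.fib] <;> omega


open Matrix

lemma Qpow (p : ℕ) (n : ℕ) :
    (!![1,1;1,0] : Matrix (Fin 2) (Fin 2) (ZMod p))^n
      = !![(Nat.fib (n+1) : ZMod p), Nat.fib n; Nat.fib n, Nat.fib (n+1) - Nat.fib n] := by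
  induction n with
  | zero => simp [Matrix.one_fin_two]
  | succ n ih =>
    rw [pow_succ, ih, Matrix.mul_fin_two]
    have h2 : (Nat.fib (n+2) : ZMod p) = Nat.fib n + Nat.fib (n+1) := by
      rw [Nat.fib_add_two]; push_cast; ring
    have h2' : (Nat.fib (n+1+1) : ZMod p) = Nat.fib n + Nat.fib (n+1) := h2
    ext i j
    fin_cases i <;> fin_cases j <;>
      simp [h2'] <;> ring

lemma fib_dvd_sub_one_or_add_one (p : ℕ) (hp : p.Prime) (h2 : 2 < p) (h5 : p ≠ 5) :
    p ∣ Nat.fib (p - 1) ∨ p ∣ Nat.fib (p + 1) := by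
  haveI : Fact p.Prime := ⟨hp⟩
  set Q : Matrix (Fin 2) (Fin 2) (ZMod p) := !![1,1;1,0] with hQ
  set t : Matrix (Fin 2) (Fin 2) (ZMod p) := !![1,2;2,-1] with ht
  have htwoQ : (1 : Matrix (Fin 2) (Fin 2) (ZMod p)) + t = (2 : ZMod p) • Q := by
    rw [hQ, ht, Matrix.one_fin_two]
    ext i j
    fin_cases i <;> fin_cases j <;>
      simp [Matrix.add_apply, Matrix.smul_apply, smul_eq_mul] <;> ring
  have ht2 : t * t = (5 : ZMod p) • 1 := by
    rw [ht, Matrix.mul_fin_two, Matrix.one_fin_two]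
    ext i j
    fin_cases i <;> fin_cases j <;>
      simp [Matrix.smul_apply, smul_eq_mul] <;> ring
  obtain ⟨k, hpk⟩ : ∃ k, p = 2 * k + 1 := by
    have := hp.two_le
    obtain ⟨m, hm⟩ := hp.odd_of_ne_two (by omega)
    exact ⟨m, hm⟩
  have htp : t ^ p = ((5 : ZMod p) ^ k) • t := by
    rw [show t ^ p = t ^ (2*k+1) by rw [← hpk], pow_succ, pow_mul, pow_two, ht2, smul_pow, one_pow, smul_mul_assoc, one_mul]
  have hfrob : ((1 : Matrix (Fin 2) (Fin 2) (ZMod p)) + t) ^ p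
      = 1 + ((5 : ZMod p) ^ k) • t := by
    rw [add_pow_char_of_commute _ (Commute.one_left t), one_pow, htp]
  rw [htwoQ, smul_pow, hQ, Qpow] at hfrob
  have h00 := congrFun (congrFun hfrob 0) 0
  have h01 := congrFun (congrFun hfrob 0) 1
  simp [ht, Matrix.add_apply, Matrix.smul_apply, Matrix.one_apply, smul_eq_mul] at h00 h01
  have two_ne : (2 : ZMod p) ≠ 0 := by
    intro hcon
    rw [show (2 : ZMod p) = ((2:ℕ) : ZMod p) by norm_cast,
      ZMod.natCast_eq_zero_iff] at hcon
    have := Nat.le_of_dvd (by norm_num) hcon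
    omega
  have five_ne : (5 : ZMod p) ≠ 0 := by
    intro hcon
    rw [show (5 : ZMod p) = ((5:ℕ) : ZMod p) by norm_cast,
      ZMod.natCast_eq_zero_iff] at hcon
    exact h5 ((Nat.prime_dvd_prime_iff_eq hp (by norm_num)).mp hcon)
  have hs2 : ((5 : ZMod p) ^ k) ^ 2 = 1 := by
    rw [← pow_mul]
    have hkk : k * 2 = p - 1 := by omega
    rw [hkk, ZMod.pow_card_sub_one_eq_one five_ne]
  have hc : (Nat.fib (p - 1) : ZMod p) + Nat.fib p = Nat.fib (p + 1) := by
    have hff := Nat.fib_add_two (n := p - 1)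
    rw [show p - 1 + 2 = p + 1 by omega, show p - 1 + 1 = p by omega] at hff
    rw [hff]; push_cast; ring
  have e1 : 2 * (Nat.fib (p - 1) : ZMod p) = 1 - 5 ^ k := by
    linear_combination h00 - h01 + 2 * hc
  have key : (2 * (Nat.fib (p - 1) : ZMod p)) * (2 * (Nat.fib (p + 1) : ZMod p)) = 0 := by
    linear_combination (2 * (Nat.fib (p+1) : ZMod p)) * e1 + (1 - 5^k) * h00 - hs2
  rcases mul_eq_zero.mp key with hz | hz
  · left
    have : (Nat.fib (p - 1) : ZMod p) = 0 := by
      rcases mul_eq_zero.mp hz with h | h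
      · exact absurd h two_ne
      · exact h
    rwa [ZMod.natCast_eq_zero_iff] at this
  · right
    have : (Nat.fib (p + 1) : ZMod p) = 0 := by
      rcases mul_eq_zero.mp hz with h | h
      · exact absurd h two_ne
      · exact h
    rwa [ZMod.natCast_eq_zero_iff] at this

lemma zf_bound (r : ℕ) (hr : r.Prime) (h5 : r ≠ 5) :
    zf r ∣ r - 1 ∨ zf r ∣ r + 1 := by
  by_cases h2 : r = 2
  · subst h2; right; rw [zf_two]
  · have h2' : 2 < r := by have := hr.two_le; omega
    rcases fib_dvd_sub_one_or_add_one r hr h2' h5 with hd | hd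
    · exact Or.inl ((zf_dvd_iff r _ hr.pos).mpr hd)
    · exact Or.inr ((zf_dvd_iff r _ hr.pos).mpr hd)

theorem stmt9 (p : ℕ) (hp : p.Prime) (hp3 : p ≠ 3)
    (h : ∀ q : ℕ, q.Prime → ¬ ellf q ∣ zf p) :
    p = gf (ellf p) ∧ p ∈ Afib := by
  have hppos := hp.pos
  have hzp := zf_mem p hppos
  have hpz : ¬ p ∣ zf p := fun hd => h p hp (Nat.lcm_dvd hd dvd_rfl)
  have hp5 : p ≠ 5 := by
    rintro rfl; rw [zf_five] at hpz; exact hpz dvd_rfl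
  have hellpos : 0 < ellf p :=
    Nat.pos_of_ne_zero (Nat.lcm_ne_zero hp.pos.ne' (zf_pos p hppos).ne')
  have hmain : p = gf (ellf p) := by
    by_cases hp2 : p = 2
    · subst hp2
      have hell : ellf 2 = 6 := by unfold ellf; rw [zf_two]; rfl
      rw [hell]
      decide
    · have h2' : 2 < p := by have := hp.two_le; omega
      have hodd : p % 2 = 1 := Nat.odd_iff.mp (hp.odd_of_ne_two hp2)
      have cop : Nat.Coprime p (zf p) := (hp.coprime_iff_not_dvd).mpr hpz
      have hL : ellf p = p * zf p := Nat.Coprime.lcm_eq_mul cop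
      have hpdg : p ∣ gf (ellf p) :=
        Nat.dvd_gcd (Nat.dvd_lcm_left _ _)
          ((zf_dvd_iff p _ hppos).mp (Nat.dvd_lcm_right _ _))
      have hq : ∀ q, q.Prime → q ∣ gf (ellf p) → q = p := by
        intro q hqp hqd
        by_contra hne
        have hq1 : q ∣ ellf p := dvd_trans hqd (Nat.gcd_dvd_left _ _)
        have hq2 : q ∣ Nat.fib (ellf p) := dvd_trans hqd (Nat.gcd_dvd_right _ _)
        have hqz : q ∣ zf p := by
          rw [hL] at hq1
          rcases (Nat.Prime.dvd_mul hqp).mp hq1 with h' | h'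
          · exact absurd ((Nat.prime_dvd_prime_iff_eq hqp hp).mp h') hne
          · exact h'
        have hzq : zf q ∣ ellf p := (zf_dvd_iff q _ hqp.pos).mpr hq2
        by_cases hpzq : p ∣ zf q
        · have hq5 : q ≠ 5 := by
            rintro rfl; rw [zf_five] at hpzq
            exact hp5 ((Nat.prime_dvd_prime_iff_eq hp (by norm_num)).mp hpzq)
          have hq2' : q ≠ 2 := by
            rintro rfl; rw [zf_two] at hpzq
            exact hp3 ((Nat.prime_dvd_prime_iff_eq hp (by norm_num)).mp hpzq)
          have hqodd : q % 2 = 1 := Nat.odd_iff.mp (hqp.odd_of_ne_two hq2')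
          have hq2le := hqp.two_le
          have hple : p ≤ q + 1 := by
            rcases zf_bound q hqp hq5 with hb | hb
            · have := Nat.le_of_dvd (by omega) (hpzq.trans hb); omega
            · have := Nat.le_of_dvd (by omega) (hpzq.trans hb); omega
          have hqle : q ≤ p + 1 := by
            rcases zf_bound p hp hp5 with hb | hb
            · have := Nat.le_of_dvd (by omega) (hqz.trans hb); omega
            · have := Nat.le_of_dvd (by omega) (hqz.trans hb); omega
          omega
        · have cop2 : Nat.Coprime (zf q) p :=
            Nat.Coprime.symm ((hp.coprime_iff_not_dvd).mpr hpzq)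
          have hzq' : zf q ∣ zf p := by
            rw [hL] at hzq
            exact cop2.dvd_of_dvd_mul_left hzq
          exact h q hqp (Nat.lcm_dvd hqz hzq')
      have hgd : gf (ellf p) ∣ p * zf p := hL ▸ Nat.gcd_dvd_left _ _
      obtain ⟨m, hm⟩ := hpdg
      have hgfpos : 0 < gf (ellf p) := Nat.gcd_pos_of_pos_left _ hellpos
      have hmz : m ∣ zf p := by
        have hpm : p * m ∣ p * zf p := hm ▸ hgd
        exact (mul_dvd_mul_iff_left (a := p) (by positivity)).mp hpm
      have hm1 : m = 1 := by
        by_contra hm1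
        obtain ⟨r, hr, hrd⟩ := Nat.exists_prime_and_dvd hm1
        have hrp : r = p := hq r hr (hm ▸ Dvd.dvd.mul_left hrd p)
        subst hrp
        exact hpz (hrd.trans hmz)
      rw [hm, hm1, mul_one]
  exact ⟨hmain, ⟨ellf p, hellpos, hmain.symm⟩⟩
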